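/- arXiv:2605.31164 — 2 statements merged into one kernel-verified Lean document; each statement's English description precedes it below -/
import Mathlib

section
/- In the linear regression setting, for any θ ∈ ℝ^d and any two sample indices a, b, the two orders of applying the SGD updates on samples a and b differ exactly by U_b(U_a(θ)) - U_a(U_b(θ)) = η²·⟨x_a, x_b⟩·(r_b(θ)·x_a - r_a(θ)·x_b). In particular the two update operators commute up to a term of order η². -/
open scoped RealInnerProductSpace

/-- Residual of sample `i` at parameters `θ`. -/
noncomputable def resid {d N : ℕ} (x : Fin N → EuclideanSpace ℝ (Fin d))
    (y : Fin N → ℝ) (i : Fin N) (θ : EuclideanSpace ℝ (Fin d)) : ℝ :=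
  y i - ⟪θ, x i⟫

/-- Single-sample SGD update on sample `a`. -/
noncomputable def sgdUpdate {d N : ℕ} (x : Fin N → EuclideanSpace ℝ (Fin d))
    (y : Fin N → ℝ) (η : ℝ) (a : Fin N) (θ : EuclideanSpace ℝ (Fin d)) :
    EuclideanSpace ℝ (Fin d) :=
  θ + (η * resid x y a θ) • x a

/-! An update on sample `a` shifts the residual of sample `b` by
`-η r_a ⟨x_a, x_b⟩`, so applying `U_a` then `U_b` moves `θ` by
`η r_a x_a + η (r_b - η r_a ⟨x_a, x_b⟩) x_b`. The first-order terms are symmetric in `a, b`,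
and only the cross terms of order `η²` survive in the difference of the two orders. -/

section

variable {d N : ℕ} (x : Fin N → EuclideanSpace ℝ (Fin d)) (y : Fin N → ℝ) (η : ℝ)
  (a b : Fin N) (θ : EuclideanSpace ℝ (Fin d))

theorem resid_sgdUpdate :
    resid x y b (sgdUpdate x y η a θ) = resid x y b θ - η * resid x y a θ * ⟪x a, x b⟫ := by
  simp only [resid, sgdUpdate, inner_add_left, real_inner_smul_left]
  ring

theorem sgdUpdate_sgdUpdate :
    sgdUpdate x y η b (sgdUpdate x y η a θ) =
      θ + (η * resid x y a θ) • x a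
        + (η * (resid x y b θ - η * resid x y a θ * ⟪x a, x b⟫)) • x b := by
  rw [sgdUpdate, resid_sgdUpdate, sgdUpdate]

end

theorem update_order_commutator_general
    (d N : ℕ)
    (x : Fin N → EuclideanSpace ℝ (Fin d)) (y : Fin N → ℝ) (η : ℝ)
    (θ : EuclideanSpace ℝ (Fin d)) (a b : Fin N) :
    sgdUpdate x y η b (sgdUpdate x y η a θ) - sgdUpdate x y η a (sgdUpdate x y η b θ) =
      (η ^ 2 * ⟪x a, x b⟫) • (resid x y b θ • x a - resid x y a θ • x b) := by
  rw [sgdUpdate_sgdUpdate, sgdUpdate_sgdUpdate, real_inner_comm (x a) (x b)]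
  module

/-- The two orders of applying the SGD updates on samples `a` and `b` differ exactly by
`η² ⟨x_a, x_b⟩ (r_b(θ) x_a - r_a(θ) x_b)`. -/
theorem update_order_commutator
    (d N : ℕ) (hN : 1 ≤ N)
    (x : Fin N → EuclideanSpace ℝ (Fin d)) (y : Fin N → ℝ) (η : ℝ)
    (θ : EuclideanSpace ℝ (Fin d)) (a b : Fin N) :
    sgdUpdate x y η b (sgdUpdate x y η a θ) - sgdUpdate x y η a (sgdUpdate x y η b θ) =
      (η ^ 2 * ⟪x a, x b⟫) • (resid x y b θ • x a - resid x y a θ • x b) :=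
  update_order_commutator_general d N x y η θ a b
end

section
/- (Correctness of the random-swap cost increment.) Let K ∈ ℕ and let S : Fin K → Fin K → ℝ be antisymmetric, i.e., S j i = -S i j for all i, j (in particular S i i = 0). For an ordering π : Fin K ≃ Fin K (π(s) is the batch at position s), define the violation cost C(π) = Σ_{s < t} max(0, S (π t) (π s)), summing over all pairs of positions s < t. Fix positions p < q, let i = π(p), j = π(q), and let π' be the ordering obtained from π by swapping the entries at positions p and q. Then C(π') - C(π) = S i j + Σ_{p < k < q} [ S i (π k) + S (π k) j ]. -/
/-- Violation cost of an ordering `π` (with `π s` the batch at position `s`):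
`C(π) = Σ_{s < t} max(0, S (π t) (π s))`. -/
noncomputable def orderCost {K : ℕ} (S : Fin K → Fin K → ℝ)
    (π : Fin K ≃ Fin K) : ℝ :=
  ∑ s : Fin K, ∑ t ∈ Finset.univ.filter (fun t => s < t), max 0 (S (π t) (π s))

/-!
Both costs sum `f (s, t) = max 0 (S (π t) (π s))`: the cost of `π` over the pairs `s < t`, the
cost of the swapped ordering over the pairs that the transposition `(p q)` keeps in order. The
two index sets differ exactly by the inversions of `(p q)`, namely `(p, q)`, `(p, k)` and
`(k, q)` for `p < k < q`, each of which enters the new cost reversed; by antisymmetry the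
change `f (t, s) - f (s, t) = max 0 a - max 0 (-a)` with `a = S (π s) (π t)` is just `a`.
-/

open Finset

namespace Equiv.Perm

variable {α : Type*} [LinearOrder α] [Fintype α]

def inversions (σ : Perm α) : Finset (α × α) :=
  {x | x.1 < x.2 ∧ σ x.2 < σ x.1}

theorem mem_inversions {σ : Perm α} {x : α × α} :
    x ∈ σ.inversions ↔ x.1 < x.2 ∧ σ x.2 < σ x.1 := by
  simp [inversions]

theorem sum_filter_lt_apply_sub_sum_filter_lt {M : Type*} [AddCommGroup M] (σ : Perm α)
    (G : α × α → M) :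
    ∑ x : α × α with σ x.1 < σ x.2, G x - ∑ x : α × α with x.1 < x.2, G x =
      ∑ x ∈ σ.inversions, (G x.swap - G x) := by
  set P := univ.filter fun x : α × α => x.1 < x.2
  set Q := univ.filter fun x : α × α => σ x.1 < σ x.2
  have hlost : P \ Q = σ.inversions := by
    ext ⟨a, b⟩
    simp only [P, Q, mem_sdiff, mem_filter_univ, mem_inversions, not_lt]
    exact and_congr_right fun hab => (σ.injective.ne hab.ne').le_iff_lt
  have hgained : Q \ P = σ.inversions.map (prodComm α α).toEmbedding := by
    ext ⟨a, b⟩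
    simp only [P, Q, mem_sdiff, mem_filter_univ, mem_map_equiv, mem_inversions, not_lt,
      prodComm_symm, prodComm_apply, Prod.fst_swap, Prod.snd_swap]
    rw [and_comm]
    exact and_congr_left fun hσ => (σ.injective.ne_iff.mp hσ.ne').le_iff_lt
  rw [← sum_sdiff_sub_sum_sdiff, hgained, hlost, sum_map, ← sum_sub_distrib]
  rfl

theorem mem_inversions_swap {p q : α} (hpq : p < q) {x : α × α} :
    x ∈ (swap p q).inversions ↔
      x = (p, q) ∨ (x.1 = p ∧ p < x.2 ∧ x.2 < q) ∨ (x.2 = q ∧ p < x.1 ∧ x.1 < q) := by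
  obtain ⟨a, b⟩ := x
  simp only [mem_inversions, swap_apply_def, Prod.mk.injEq]
  split_ifs <;> grind

theorem sum_inversions_swap [LocallyFiniteOrder α] {M : Type*} [AddCommMonoid M] {p q : α}
    (hpq : p < q) (f : α × α → M) :
    ∑ x ∈ (swap p q).inversions, f x = f (p, q) + ∑ k ∈ Ioo p q, (f (p, k) + f (k, q)) := by
  set L := (Ioo p q).image fun k => (p, k)
  set R := (Ioo p q).image fun k => (k, q)
  have hset : (swap p q).inversions = insert (p, q) (L ∪ R) := by
    ext x
    simp only [mem_inversions_swap hpq, L, R, mem_insert, mem_union, mem_image, mem_Ioo]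
    grind
  have hpq_notMem : (p, q) ∉ L ∪ R := by
    simp only [L, R, mem_union, mem_image, mem_Ioo]
    grind
  have hdisj : _root_.Disjoint L R := by
    simp only [L, R, disjoint_left, mem_image, mem_Ioo]
    grind
  rw [hset, sum_insert hpq_notMem, sum_union hdisj, sum_image (Prod.mk_right_injective p).injOn,
    sum_image (Prod.mk_left_injective q).injOn, sum_add_distrib]

end Equiv.Perm

theorem orderCost_eq_sum_filter_lt {K : ℕ} (S : Fin K → Fin K → ℝ) (π : Fin K ≃ Fin K) :
    orderCost S π = ∑ x : Fin K × Fin K with x.1 < x.2, max 0 (S (π x.2) (π x.1)) := by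
  rw [orderCost, sum_filter, Fintype.sum_prod_type]
  simp only [sum_filter]

theorem orderCost_perm_trans {K : ℕ} (S : Fin K → Fin K → ℝ) (σ : Equiv.Perm (Fin K))
    (π : Fin K ≃ Fin K) :
    orderCost S (σ.trans π) =
      ∑ x : Fin K × Fin K with σ.symm x.1 < σ.symm x.2, max 0 (S (π x.2) (π x.1)) := by
  rw [orderCost_eq_sum_filter_lt]
  exact sum_equiv (σ.prodCongr σ) (by simp) (by simp)

/-- Correctness of the random-swap cost increment: for an antisymmetric advantage
matrix `S`, swapping positions `p < q` of the ordering `π` (with `i = π p`,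
`j = π q`) changes the violation cost by
`S i j + Σ_{p < k < q} (S i (π k) + S (π k) j)`. -/
theorem swap_cost_increment
    (K : ℕ) (S : Fin K → Fin K → ℝ)
    (hanti : ∀ i j : Fin K, S j i = -S i j)
    (π : Fin K ≃ Fin K) (p q : Fin K) (hpq : p < q) :
    orderCost S ((Equiv.swap p q).trans π) - orderCost S π =
      S (π p) (π q) +
        ∑ k ∈ Finset.univ.filter (fun k => p < k ∧ k < q),
          (S (π p) (π k) + S (π k) (π q)) := by
  have hpart : ∀ a b, max 0 (S a b) - max 0 (S b a) = S a b := fun a b => by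
    rw [hanti a b, max_comm, max_comm 0]
    exact max_zero_sub_max_neg_zero_eq_self _
  rw [orderCost_perm_trans, Equiv.symm_swap, orderCost_eq_sum_filter_lt,
    Equiv.Perm.sum_filter_lt_apply_sub_sum_filter_lt, Equiv.Perm.sum_inversions_swap hpq,
    filter_lt_lt_eq_Ioo]
  simp only [Prod.fst_swap, Prod.snd_swap, hpart]
end
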